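/- arXiv:1201.4326 — 3 statements merged into one kernel-verified Lean document; each statement's English description precedes it below -/
import Mathlib

section
/- There is no homomorphism from the 3-graph H7 to any blow-up of a single 3-edge. Precisely: there is no function f from the vertex set {1,...,7} of H7 to a set A ⊔ B ⊔ C partitioned into three parts such that every edge {x,y,z} of H7 has f(x), f(y), f(z) lying in three distinct parts, where H7 is the 3-graph on {1,...,7} with edges 124, 137, 156, 235, 267, 346, 457, 653, 647, 621, 542, 517, 431, 327. -/
/-- The 3-graph `H₇` on vertex set `{1, ..., 7}` with 14 edges. -/
def H7 : Finset (Finset ℕ) :=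
  {{1,2,4}, {1,3,7}, {1,5,6}, {2,3,5}, {2,6,7}, {3,4,6}, {4,5,7},
   {6,5,3}, {6,4,7}, {6,2,1}, {5,4,2}, {5,1,7}, {4,3,1}, {3,2,7}}

/-!
Sorting the vertices of `V` by the part they lie in turns a homomorphism into the blow-up of an
edge into a colouring of `{1, ..., 7}` with three colours under which every edge of `H₇` is
rainbow. But the first seven edges of `H₇` form a Fano plane, so every pair of vertices lies in a
common edge and must get distinct colours: impossible with seven vertices and three colours.
-/

open Finset

lemma exists_fin_three_index_of_disjoint {V : Type*} {A B C : Set V}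
    (hAB : Disjoint A B) (hAC : Disjoint A C) (hBC : Disjoint B C) :
    ∃ p : V → Fin 3, (∀ v ∈ A, p v = 0) ∧ (∀ v ∈ B, p v = 1) ∧ (∀ v ∈ C, p v = 2) := by
  classical
  refine ⟨fun v => if v ∈ A then 0 else if v ∈ B then 1 else 2, ?_, ?_, ?_⟩
  · intro v hv
    simp [hv]
  · intro v hv
    simp [hv, hAB.notMem_of_mem_right hv]
  · intro v hv
    simp [hAC.notMem_of_mem_right hv, hBC.notMem_of_mem_right hv]

lemma injOn_triple {α β : Type*} [DecidableEq α] {g : α → β} {x y z : α}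
    (hxy : g x ≠ g y) (hxz : g x ≠ g z) (hyz : g y ≠ g z) :
    Set.InjOn g ({x, y, z} : Finset α) := by
  intro a ha b hb hab
  simp only [coe_insert, coe_singleton, Set.mem_insert_iff, Set.mem_singleton_iff] at ha hb
  rcases ha with rfl | rfl | rfl <;> rcases hb with rfl | rfl | rfl <;> simp_all [eq_comm]

lemma H7_exists_edge_of_ne :
    ∀ a ∈ Icc 1 7, ∀ b ∈ Icc 1 7, a ≠ b → ∃ e ∈ H7, a ∈ e ∧ b ∈ e := by
  decide

lemma H7_not_rainbow (g : ℕ → Fin 3) : ¬ ∀ e ∈ H7, Set.InjOn g e := by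
  intro hg
  obtain ⟨a, ha, b, hb, hab, hgab⟩ :=
    exists_ne_map_eq_of_card_lt_of_maps_to (s := Icc 1 7) (t := (univ : Finset (Fin 3))) (by simp)
      fun _ _ => mem_coe.2 (mem_univ _)
  obtain ⟨e, he, hae, hbe⟩ := H7_exists_edge_of_ne a ha b hb hab
  exact hab (hg e he hae hbe hgab)

theorem no_hom_H7_to_edge_blowup_general (V : Type*) (A B C : Set V)
    (hAB : Disjoint A B) (hAC : Disjoint A C) (hBC : Disjoint B C) :
    ¬ ∃ f : ℕ → V, ∀ e ∈ H7, ∃ x y z : ℕ,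
      e = {x, y, z} ∧ f x ∈ A ∧ f y ∈ B ∧ f z ∈ C := by
  rintro ⟨f, hf⟩
  obtain ⟨p, hpA, hpB, hpC⟩ := exists_fin_three_index_of_disjoint hAB hAC hBC
  refine H7_not_rainbow (p ∘ f) fun e he => ?_
  obtain ⟨x, y, z, rfl, hx, hy, hz⟩ := hf e he
  exact injOn_triple (by simp [hpA _ hx, hpB _ hy]) (by simp [hpA _ hx, hpC _ hz])
    (by simp [hpB _ hy, hpC _ hz])

/-- There is no homomorphism from `H₇` into a blow-up of a single 3-edge: for any set `V`
partitioned into three parts `A`, `B`, `C`, there is no map `f` sending the three vertices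
of every edge of `H₇` into three distinct parts. -/
theorem no_hom_H7_to_edge_blowup (V : Type*) (A B C : Set V)
    (hcover : ∀ v : V, v ∈ A ∨ v ∈ B ∨ v ∈ C)
    (hAB : Disjoint A B) (hAC : Disjoint A C) (hBC : Disjoint B C) :
    ¬ ∃ f : ℕ → V, ∀ e ∈ H7, ∃ x y z : ℕ,
      e = {x, y, z} ∧ f x ∈ A ∧ f y ∈ B ∧ f z ∈ C :=
  no_hom_H7_to_edge_blowup_general V A B C hAB hAC hBC
end

section
/- The inducibility of the 3-graph 4.2 equals 3/4; that is, lim_{n→∞} (max over all 3-graphs G on n vertices of e_{4.2}(G))/C(n,4) = 3/4. -/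
/-- A 3-graph on vertex set `Fin n`, given by its edge set: every edge has 3 vertices. -/
def IsThreeGraph {n : ℕ} (G : Finset (Finset (Fin n))) : Prop :=
  ∀ e ∈ G, e.card = 3

/-- `G` contains a (not necessarily induced) subgraph isomorphic to `F`. -/
def ContainsCopy {m n : ℕ} (F : Finset (Finset (Fin m))) (G : Finset (Finset (Fin n))) : Prop :=
  ∃ f : Fin m ↪ Fin n, ∀ e ∈ F, e.map f ∈ G

/-- `G` is `𝓕`-free: it contains no member of the family `𝓕` as a subgraph. -/
def FamilyFree {n : ℕ} (𝓕 : Set ((m : ℕ) × Finset (Finset (Fin m))))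
    (G : Finset (Finset (Fin n))) : Prop :=
  ∀ F ∈ 𝓕, ¬ ContainsCopy F.2 G

/-- The vertex set `S` induces a copy of `H` in `G`. -/
def InducesCopy {h n : ℕ} (H : Finset (Finset (Fin h))) (G : Finset (Finset (Fin n)))
    (S : Finset (Fin n)) : Prop :=
  ∃ f : Fin h ↪ Fin n, Finset.univ.map f = S ∧
    ∀ e : Finset (Fin h), e.card = 3 → (e ∈ H ↔ e.map f ∈ G)

/-- `e_H(G)`: the number of `h`-element vertex subsets of `G` inducing a copy of `H`. -/
noncomputable def eH {h n : ℕ} (H : Finset (Finset (Fin h)))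
    (G : Finset (Finset (Fin n))) : ℕ :=
  Set.ncard {S : Finset (Fin n) | InducesCopy H G S}

/-- The Turán `H`-number `ex_H(n, 𝓕)`: the maximum number of induced copies of `H`
in an `𝓕`-free 3-graph on `n` vertices. -/
noncomputable def exH {h : ℕ} (H : Finset (Finset (Fin h)))
    (𝓕 : Set ((m : ℕ) × Finset (Finset (Fin m)))) (n : ℕ) : ℕ :=
  sSup {k : ℕ | ∃ G : Finset (Finset (Fin n)),
    IsThreeGraph G ∧ FamilyFree 𝓕 G ∧ eH H G = k}

/-- The complete 3-graph on 4 vertices. -/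
def K4 : Finset (Finset (Fin 4)) := {{0,1,2}, {0,1,3}, {0,2,3}, {1,2,3}}

/-- The 3-graph on 4 vertices with exactly three edges. -/
def K4minus : Finset (Finset (Fin 4)) := {{0,1,2}, {0,1,3}, {0,2,3}}

/-- The 3-graph `4.2` on 4 vertices with exactly two edges. -/
def FourTwo : Finset (Finset (Fin 4)) := {{0,1,2}, {0,1,3}}

/-- The strong 5-cycle. -/
def C5 : Finset (Finset (Fin 5)) := {{0,1,2}, {1,2,3}, {2,3,4}, {3,4,0}, {4,0,1}}

/-- The 3-graph `F_{3,2}`. -/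
def F32 : Finset (Finset (Fin 5)) := {{0,1,2}, {0,1,3}, {0,1,4}, {2,3,4}}

/-!
Upper bound: count the ordered pairs `(e, f)` of triples with `e ∈ G`, `f ∉ G` and
`|e ∩ f| = 2`. A 4-set spanning `w` edges contains `w (4 - w) ≥ 4 [w = 2]` of them, and a pair
of codegree `d` lies in `d (n - 2 - d) ≤ (n - 2)² / 4` of them. Hence
`16 e_{4.2}(G) ≤ C(n,2) (n - 2)²`, which is `(3/4 + O(1/n)) · 16 C(n,4)`.

Lower bound: for a graph `h`, take as edges the triples spanning an odd number of edges of `h`.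
Exactly 48 of the 64 graphs on four vertices make the 4-set span exactly two such triples, so
averaging over all graphs `h` on `n` vertices gives a 3-graph with `e_{4.2} ≥ (3/4) C(n,4)`.
-/

open Finset

lemma injective_vec_four {α : Type*} {a b c d : α} (hab : a ≠ b) (hac : a ≠ c) (had : a ≠ d)
    (hbc : b ≠ c) (hbd : b ≠ d) (hcd : c ≠ d) : Function.Injective ![a, b, c, d] := by
  intro i j h
  fin_cases i <;> fin_cases j <;> simp_all [eq_comm]

namespace Finset

lemma powerset_map {α β : Type*} (f : α ↪ β) (s : Finset α) :
    (s.map f).powerset = s.powerset.map (mapEmbedding f).toEmbedding := by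
  ext t
  simp [subset_map_iff, eq_comm]

lemma exists_map_univ_eq {α : Type*} {s : Finset α} {k : ℕ} (hs : #s = k) :
    ∃ f : Fin k ↪ α, univ.map f = s := by
  subst hs
  refine ⟨s.equivFin.symm.toEmbedding.trans (Function.Embedding.subtype _), ?_⟩
  ext x
  simp only [mem_map, mem_univ, true_and, Function.Embedding.trans_apply,
    Equiv.coe_toEmbedding, Function.Embedding.coe_subtype]
  exact ⟨fun ⟨a, ha⟩ => ha ▸ (s.equivFin.symm a).2, fun hx => ⟨s.equivFin ⟨x, hx⟩, by simp⟩⟩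

lemma card_filter_powerset_inter {α : Type*} [DecidableEq α] {P Q : Finset α} (hQP : Q ⊆ P)
    (φ : Finset α → Prop) [DecidablePred φ] :
    #(P.powerset.filter fun h => φ (h ∩ Q)) = #(Q.powerset.filter φ) * 2 ^ (#P - #Q) := by
  have hsplit : ∀ r s : Finset α, r ⊆ Q → s ⊆ P \ Q → (r ∪ s) ∩ Q = r ∧ (r ∪ s) \ Q = s := by
    intro r s hr hs
    constructor <;> ext x <;> grind
  rw [← card_sdiff_of_subset hQP, ← card_powerset, ← card_product]
  refine card_bij' (fun h _ => (h ∩ Q, h \ Q)) (fun q _ => q.1 ∪ q.2) ?_ ?_ ?_ ?_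
  · intro h hh
    simp only [mem_filter, mem_powerset, mem_product] at hh ⊢
    exact ⟨⟨inter_subset_right, hh.2⟩, sdiff_subset_sdiff hh.1 le_rfl⟩
  · rintro ⟨r, s⟩ hq
    simp only [mem_filter, mem_powerset, mem_product] at hq ⊢
    rw [(hsplit r s hq.1.1 hq.2).1]
    exact ⟨union_subset (hq.1.1.trans hQP) (hq.2.trans sdiff_subset), hq.1.2⟩
  · intro h _
    exact sup_inf_sdiff h Q
  · rintro ⟨r, s⟩ hq
    simp only [mem_filter, mem_powerset, mem_product] at hq
    exact Prod.ext (hsplit r s hq.1.1 hq.2).1 (hsplit r s hq.1.1 hq.2).2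

end Finset

namespace ThreeGraph

section Counting

variable {α β : Type*} [DecidableEq α] [DecidableEq β]

def edgeCount (G : Finset (Finset α)) (S : Finset α) : ℕ :=
  #((S.powersetCard 3).filter (· ∈ G))

lemma edgeCount_map_of_iff (f : β ↪ α) {G : Finset (Finset α)} {G' : Finset (Finset β)}
    (hG : ∀ e : Finset β, #e = 3 → (e.map f ∈ G ↔ e ∈ G')) (T : Finset β) :
    edgeCount G (T.map f) = edgeCount G' T := by
  rw [edgeCount, edgeCount, powersetCard_map, filter_map, card_map]
  congr 1
  exact filter_congr fun e he => hG e (mem_powersetCard.1 he).2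

lemma card_inter_le_two_of_ne {t₁ t₂ : Finset α} (h₁ : #t₁ = 3) (h₂ : #t₂ = 3) (hne : t₁ ≠ t₂) :
    #(t₁ ∩ t₂) ≤ 2 := by
  by_contra! h
  have hle := card_le_card (inter_subset_left (s₁ := t₁) (s₂ := t₂))
  exact hne ((eq_of_subset_of_card_le inter_subset_left (by omega)).symm.trans
    (eq_of_subset_of_card_le inter_subset_right (by omega)))

lemma union_eq_and_card_inter_eq_two {S t₁ t₂ : Finset α} (hS : #S = 4)
    (h₁ : t₁ ∈ S.powersetCard 3) (h₂ : t₂ ∈ S.powersetCard 3) (hne : t₁ ≠ t₂) :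
    t₁ ∪ t₂ = S ∧ #(t₁ ∩ t₂) = 2 := by
  rw [mem_powersetCard] at h₁ h₂
  have hle := card_inter_le_two_of_ne h₁.2 h₂.2 hne
  have hsum := card_union_add_card_inter t₁ t₂
  have hsub : t₁ ∪ t₂ ⊆ S := union_subset h₁.1 h₂.1
  have := card_le_card hsub
  exact ⟨eq_of_subset_of_card_le hsub (by omega), by omega⟩

lemma powersetCard_three_eq_image_erase {S : Finset α} (hS : #S = 4) :
    S.powersetCard 3 = S.image S.erase := by
  ext t
  simp only [mem_powersetCard, mem_image]
  constructor
  · rintro ⟨hts, ht⟩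
    exact (covBy_iff_card_sdiff_eq_one.2
      ⟨hts, by rw [card_sdiff_of_subset hts]; omega⟩).exists_finset_erase
  · rintro ⟨x, hx, rfl⟩
    exact ⟨erase_subset x S, by rw [card_erase_of_mem hx, hS]⟩

lemma edgeCount_eq_card_filter_erase {S : Finset α} (hS : #S = 4) (G : Finset (Finset α)) :
    edgeCount G S = #(S.filter (S.erase · ∈ G)) := by
  rw [edgeCount, powersetCard_three_eq_image_erase hS, filter_image,
    card_image_of_injOn ((erase_injOn S).mono (filter_subset _ _))]

end Counting

section Upper

variable {α : Type*} [DecidableEq α] [Fintype α] (G : Finset (Finset α))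

def codegree (p : Finset α) : ℕ :=
  #(((univ.powersetCard 3).filter (p ⊆ ·)).filter (· ∈ G))

def edgeNonEdgePairs : Finset (Finset α × Finset α) :=
  (univ.powersetCard 3 ×ˢ univ.powersetCard 3).filter
    fun q => q.1 ∈ G ∧ q.2 ∉ G ∧ #(q.1 ∩ q.2) = 2

lemma card_edgeNonEdgePairs_eq_sum_edgeCount :
    #(edgeNonEdgePairs G) =
      ∑ S ∈ univ.powersetCard 4, edgeCount G S * (4 - edgeCount G S) := by
  have hunion : ∀ q ∈ edgeNonEdgePairs G, q.1 ∪ q.2 ∈ univ.powersetCard 4 := by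
    intro q hq
    simp only [edgeNonEdgePairs, mem_filter, mem_product, mem_powersetCard] at hq
    have := card_union_add_card_inter q.1 q.2
    exact mem_powersetCard.2 ⟨subset_univ _, by omega⟩
  rw [card_eq_sum_card_fiberwise hunion]
  refine sum_congr rfl fun S hS => ?_
  have hS4 := (mem_powersetCard.1 hS).2
  have hfiber : (edgeNonEdgePairs G).filter (fun q => q.1 ∪ q.2 = S) =
      (S.powersetCard 3).filter (· ∈ G) ×ˢ (S.powersetCard 3).filter (· ∉ G) := by
    ext ⟨t₁, t₂⟩
    simp only [edgeNonEdgePairs, mem_filter, mem_product, mem_powersetCard, subset_univ, true_and]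
    constructor
    · rintro ⟨⟨⟨h₁, h₂⟩, hG₁, hG₂, -⟩, rfl⟩
      exact ⟨⟨⟨subset_union_left, h₁⟩, hG₁⟩, ⟨subset_union_right, h₂⟩, hG₂⟩
    · rintro ⟨⟨⟨hs₁, h₁⟩, hG₁⟩, ⟨hs₂, h₂⟩, hG₂⟩
      obtain ⟨hU, hI⟩ := union_eq_and_card_inter_eq_two hS4 (mem_powersetCard.2 ⟨hs₁, h₁⟩)
        (mem_powersetCard.2 ⟨hs₂, h₂⟩) (ne_of_mem_of_not_mem hG₁ hG₂)
      exact ⟨⟨⟨h₁, h₂⟩, hG₁, hG₂, hI⟩, hU⟩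
  have hsplit := card_filter_add_card_filter_not (s := S.powersetCard 3) (· ∈ G)
  rw [card_powersetCard, hS4, show Nat.choose 4 3 = 4 by rfl] at hsplit
  rw [hfiber, card_product, edgeCount, ← hsplit, Nat.add_sub_cancel_left]

lemma card_edgeNonEdgePairs_eq_sum_codegree :
    #(edgeNonEdgePairs G) =
      ∑ p ∈ univ.powersetCard 2, codegree G p * (Fintype.card α - 2 - codegree G p) := by
  have hinter : ∀ q ∈ edgeNonEdgePairs G, q.1 ∩ q.2 ∈ univ.powersetCard 2 := fun q hq =>
    mem_powersetCard.2 ⟨subset_univ _, (mem_filter.1 hq).2.2.2⟩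
  rw [card_eq_sum_card_fiberwise hinter]
  refine sum_congr rfl fun p hp => ?_
  have hp2 := (mem_powersetCard.1 hp).2
  have hfiber : (edgeNonEdgePairs G).filter (fun q => q.1 ∩ q.2 = p) =
      ((univ.powersetCard 3).filter (p ⊆ ·)).filter (· ∈ G) ×ˢ
        ((univ.powersetCard 3).filter (p ⊆ ·)).filter (· ∉ G) := by
    ext ⟨t₁, t₂⟩
    simp only [edgeNonEdgePairs, mem_filter, mem_product, mem_powersetCard, subset_univ, true_and]
    constructor
    · rintro ⟨⟨⟨h₁, h₂⟩, hG₁, hG₂, -⟩, rfl⟩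
      exact ⟨⟨⟨h₁, inter_subset_left⟩, hG₁⟩, ⟨h₂, inter_subset_right⟩, hG₂⟩
    · rintro ⟨⟨⟨h₁, hp₁⟩, hG₁⟩, ⟨h₂, hp₂⟩, hG₂⟩
      have hle := card_inter_le_two_of_ne h₁ h₂ (ne_of_mem_of_not_mem hG₁ hG₂)
      have hI : p = t₁ ∩ t₂ := eq_of_subset_of_card_le (subset_inter hp₁ hp₂) (by omega)
      exact ⟨⟨⟨h₁, h₂⟩, hG₁, hG₂, hI ▸ hp2⟩, hI.symm⟩
  have hsplit := card_filter_add_card_filter_not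
    (s := (univ.powersetCard 3).filter (p ⊆ ·)) (· ∈ G)
  rw [card_filter_powersetCard_subset p univ 3 (subset_univ p) (by omega), card_univ, hp2,
    Nat.choose_one_right] at hsplit
  rw [hfiber, card_product, codegree, ← hsplit, Nat.add_sub_cancel_left]

lemma codegree_le {p : Finset α} (hp : #p = 2) : codegree G p ≤ Fintype.card α - 2 := by
  calc codegree G p ≤ #((univ.powersetCard 3).filter (p ⊆ ·)) := card_filter_le _ _
    _ = Fintype.card α - 2 := by
      rw [card_filter_powersetCard_subset p univ 3 (subset_univ p) (by omega), card_univ, hp,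
        Nat.choose_one_right]

theorem sixteen_mul_card_edgeCount_eq_two_le :
    16 * #((univ.powersetCard 4).filter (edgeCount G · = 2)) ≤
      (Fintype.card α).choose 2 * (Fintype.card α - 2) ^ 2 := by
  have hquads : 4 * #((univ.powersetCard 4).filter (edgeCount G · = 2)) ≤
      #(edgeNonEdgePairs G) := by
    rw [card_edgeNonEdgePairs_eq_sum_edgeCount, card_filter, mul_sum]
    refine sum_le_sum fun S _ => ?_
    split_ifs with h <;> simp [h]
  have hpairs : ∀ p ∈ univ.powersetCard 2,
      4 * (codegree G p * (Fintype.card α - 2 - codegree G p)) ≤ (Fintype.card α - 2) ^ 2 := by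
    intro p hp
    have := four_mul_le_sq_add (codegree G p) (Fintype.card α - 2 - codegree G p)
    rwa [Nat.add_sub_cancel' (codegree_le G (mem_powersetCard.1 hp).2), mul_assoc] at this
  calc 16 * #((univ.powersetCard 4).filter (edgeCount G · = 2))
      ≤ 4 * #(edgeNonEdgePairs G) := by omega
    _ = ∑ p ∈ univ.powersetCard 2, 4 * (codegree G p * (Fintype.card α - 2 - codegree G p)) := by
        rw [card_edgeNonEdgePairs_eq_sum_codegree, mul_sum]
    _ ≤ ∑ _p ∈ univ.powersetCard 2, (Fintype.card α - 2) ^ 2 := sum_le_sum hpairs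
    _ = (Fintype.card α).choose 2 * (Fintype.card α - 2) ^ 2 := by
        rw [sum_const, card_powersetCard, card_univ, smul_eq_mul]

end Upper

section Construction

variable {α : Type*} [DecidableEq α] [Fintype α]

def oddTriples (h : Finset (Finset α)) : Finset (Finset α) :=
  (univ.powersetCard 3).filter fun t => Odd #(h ∩ t.powersetCard 2)

lemma card_of_mem_oddTriples {h : Finset (Finset α)} {t : Finset α} (ht : t ∈ oddTriples h) :
    #t = 3 :=
  (mem_powersetCard.1 (mem_filter.1 ht).1).2

lemma edgeCount_oddTriples_inter_powersetCard (h : Finset (Finset α)) (S : Finset α) :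
    edgeCount (oddTriples (h ∩ S.powersetCard 2)) S = edgeCount (oddTriples h) S := by
  unfold edgeCount
  congr 1
  refine filter_congr fun t ht => ?_
  rw [oddTriples, oddTriples, mem_filter, mem_filter, inter_assoc,
    inter_eq_right.2 (powersetCard_mono (mem_powersetCard.1 ht).1)]

lemma map_mem_oddTriples_map_iff {β : Type*} [DecidableEq β] [Fintype β] (f : β ↪ α)
    (r : Finset (Finset β)) {e : Finset β} (he : #e = 3) :
    e.map f ∈ oddTriples (r.map (mapEmbedding f).toEmbedding) ↔ e ∈ oddTriples r := by
  simp [oddTriples, he, powersetCard_map, ← map_inter]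

lemma card_filter_edgeCount_oddTriples_fin_four :
    #((univ.powersetCard 2 : Finset (Finset (Fin 4))).powerset.filter
      fun r => edgeCount (oddTriples r) univ = 2) = 48 := by
  decide

lemma card_filter_edgeCount_oddTriples_eq_two {S : Finset α} (hS : #S = 4) :
    #((S.powersetCard 2).powerset.filter fun r => edgeCount (oddTriples r) S = 2) = 48 := by
  obtain ⟨f, rfl⟩ := exists_map_univ_eq hS
  rw [powersetCard_map, powerset_map, filter_map, card_map,
    ← card_filter_edgeCount_oddTriples_fin_four]
  congr 1
  refine filter_congr fun r _ => ?_
  rw [Function.comp_apply, RelEmbedding.coe_toEmbedding, mapEmbedding_apply,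
    edgeCount_map_of_iff f fun e he => map_mem_oddTriples_map_iff f r he]

lemma four_mul_card_filter_edgeCount_oddTriples {S : Finset α} (hS : #S = 4) :
    4 * #((univ.powersetCard 2).powerset.filter fun h => edgeCount (oddTriples h) S = 2) =
      3 * 2 ^ (Fintype.card α).choose 2 := by
  have hQP : S.powersetCard 2 ⊆ univ.powersetCard 2 := powersetCard_mono (subset_univ S)
  have hQ : #(S.powersetCard 2) = 6 := by rw [card_powersetCard, hS]; rfl
  have hP : #(univ.powersetCard 2 : Finset (Finset α)) = (Fintype.card α).choose 2 := by
    rw [card_powersetCard, card_univ]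
  obtain ⟨k, hk⟩ := Nat.exists_eq_add_of_le (hQ ▸ hP ▸ card_le_card hQP)
  rw [filter_congr fun h _ => by rw [← edgeCount_oddTriples_inter_powersetCard h S],
    card_filter_powerset_inter hQP fun r => edgeCount (oddTriples r) S = 2,
    card_filter_edgeCount_oddTriples_eq_two hS, hQ, hP, hk, Nat.add_sub_cancel_left, pow_add]
  ring

theorem exists_three_mul_choose_le_four_mul_card_edgeCount_eq_two :
    ∃ G : Finset (Finset α), (∀ e ∈ G, #e = 3) ∧
      3 * (Fintype.card α).choose 4 ≤ 4 * #((univ.powersetCard 4).filter (edgeCount G · = 2)) := by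
  set P : Finset (Finset α) := univ.powersetCard 2
  suffices ∃ h ∈ P.powerset, 3 * (Fintype.card α).choose 4 ≤
      4 * #((univ.powersetCard 4).filter (edgeCount (oddTriples h) · = 2)) by
    obtain ⟨h, -, hh⟩ := this
    exact ⟨oddTriples h, fun e => card_of_mem_oddTriples, hh⟩
  refine exists_le_of_sum_le ⟨∅, empty_mem_powerset P⟩ (le_of_eq ?_)
  calc ∑ _h ∈ P.powerset, 3 * (Fintype.card α).choose 4
      = ∑ S ∈ univ.powersetCard 4,
          4 * #(P.powerset.filter fun h => edgeCount (oddTriples h) S = 2) := by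
        rw [sum_congr rfl fun S hS => four_mul_card_filter_edgeCount_oddTriples
          (mem_powersetCard.1 hS).2, sum_const, sum_const, card_powerset, card_powersetCard,
          card_powersetCard, card_univ, smul_eq_mul, smul_eq_mul]
        ring
    _ = ∑ h ∈ P.powerset, 4 * #((univ.powersetCard 4).filter (edgeCount (oddTriples h) · = 2)) := by
        simp only [card_filter, ← mul_sum]
        rw [sum_comm]

end Construction

section FourTwo

variable {n : ℕ}

lemma erase_mem_fourTwo_iff (i : Fin 4) : univ.erase i ∈ FourTwo ↔ i = 2 ∨ i = 3 := by
  fin_cases i <;> decide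

lemma edgeCount_fourTwo : edgeCount FourTwo univ = 2 := by decide

lemma inducesCopy_fourTwo_iff (G : Finset (Finset (Fin n))) (S : Finset (Fin n)) :
    InducesCopy FourTwo G S ↔ #S = 4 ∧ edgeCount G S = 2 := by
  constructor
  · rintro ⟨f, rfl, hf⟩
    exact ⟨by simp, by rw [edgeCount_map_of_iff f (fun e he => (hf e he).symm), edgeCount_fourTwo]⟩
  rintro ⟨hS, h2⟩
  rw [edgeCount_eq_card_filter_erase hS] at h2
  set D := S.filter (S.erase · ∈ G) with hD
  have hDS : D ⊆ S := filter_subset _ _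
  obtain ⟨c, d, hcd, hcdD⟩ := card_eq_two.1 h2
  obtain ⟨a, b, hab, habS⟩ := card_eq_two.1
    (show #(S \ D) = 2 by rw [card_sdiff_of_subset hDS, hS, h2])
  have hc : c ∈ D := by simp [hcdD]
  have hd : d ∈ D := by simp [hcdD]
  have ha : a ∉ D := (Finset.mem_sdiff.1 (habS ▸ mem_insert_self a {b})).2
  have hb : b ∉ D := (Finset.mem_sdiff.1 (habS ▸ mem_insert_of_mem (mem_singleton_self b))).2
  let f : Fin 4 ↪ Fin n := ⟨![a, b, c, d], injective_vec_four hab (ne_of_mem_of_not_mem hc ha).symm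
    (ne_of_mem_of_not_mem hd ha).symm (ne_of_mem_of_not_mem hc hb).symm
    (ne_of_mem_of_not_mem hd hb).symm hcd⟩
  have hf : ⇑f = ![a, b, c, d] := rfl
  have hfS : univ.map f = S := by
    rw [← sdiff_union_of_subset hDS, habS, hcdD]
    ext x
    simp [hf, Fin.exists_fin_succ, eq_comm, or_left_comm]
  refine ⟨f, hfS, fun e he => ?_⟩
  obtain ⟨i, -, rfl⟩ := mem_image.1 <| (powersetCard_three_eq_image_erase (card_fin 4)) ▸
    mem_powersetCard.2 ⟨subset_univ e, he⟩
  have hfi : f i ∈ S := hfS ▸ mem_map_of_mem f (mem_univ i)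
  have hfiD : S.erase (f i) ∈ G ↔ f i ∈ D := by rw [hD, mem_filter, and_iff_right hfi]
  rw [map_erase, hfS, erase_mem_fourTwo_iff, hfiD]
  fin_cases i <;> simp [hf, ha, hb, hc, hd]

lemma eH_fourTwo (G : Finset (Finset (Fin n))) :
    eH FourTwo G = #((univ.powersetCard 4).filter (edgeCount G · = 2)) := by
  rw [eH, ← Set.ncard_coe_finset]
  congr 1
  ext S
  simp [inducesCopy_fourTwo_iff]

end FourTwo

section Extremal

variable {h n : ℕ} {H : Finset (Finset (Fin h))} {𝓕 : Set ((m : ℕ) × Finset (Finset (Fin m)))}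

lemma exH_le {B : ℕ} (hB : ∀ G : Finset (Finset (Fin n)), IsThreeGraph G → eH H G ≤ B) :
    exH H 𝓕 n ≤ B :=
  csSup_le' fun _ ⟨G, hG, _, hk⟩ => hk ▸ hB G hG

lemma eH_le_exH {G : Finset (Finset (Fin n))} (hG : IsThreeGraph G) (hF : FamilyFree 𝓕 G) :
    eH H G ≤ exH H 𝓕 n :=
  le_csSup ⟨Nat.card (Finset (Fin n)), fun _ ⟨_, _, _, hk⟩ => hk ▸ Set.ncard_le_card _⟩
    ⟨G, hG, hF, rfl⟩

end Extremal

lemma sixteen_mul_exH_fourTwo_le (𝓕 : Set ((m : ℕ) × Finset (Finset (Fin m)))) (n : ℕ) :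
    16 * exH FourTwo 𝓕 n ≤ n.choose 2 * (n - 2) ^ 2 := by
  rw [mul_comm, ← Nat.le_div_iff_mul_le (by norm_num)]
  refine exH_le fun G _ => (Nat.le_div_iff_mul_le (by norm_num)).2 ?_
  rw [mul_comm, eH_fourTwo]
  simpa using sixteen_mul_card_edgeCount_eq_two_le G

lemma three_mul_choose_le_four_mul_exH_fourTwo (n : ℕ) :
    3 * n.choose 4 ≤ 4 * exH FourTwo (∅ : Set ((m : ℕ) × Finset (Finset (Fin m)))) n := by
  obtain ⟨G, hG, hle⟩ := exists_three_mul_choose_le_four_mul_card_edgeCount_eq_two (α := Fin n)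
  rw [Fintype.card_fin, ← eH_fourTwo] at hle
  exact hle.trans (Nat.mul_le_mul_left 4 (eH_le_exH hG fun F hF => absurd hF (Set.notMem_empty F)))

lemma cast_choose_four_mul_twelve {n : ℕ} (hn : 2 ≤ n) :
    (n.choose 4 : ℝ) * 12 = n.choose 2 * ((n : ℝ) - 2) * ((n : ℝ) - 3) := by
  have h := congrArg (Nat.cast (R := ℝ)) (Nat.choose_mul (n := n) (k := 4) (s := 2) (by norm_num))
  push_cast [Nat.cast_choose_two, Nat.cast_sub hn] at h
  rw [Nat.cast_choose_two]
  linear_combination 2 * h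

lemma three_quarters_le_exH_fourTwo_div_choose {n : ℕ} (hn : 4 ≤ n) :
    (3 / 4 : ℝ) ≤ exH FourTwo (∅ : Set ((m : ℕ) × Finset (Finset (Fin m)))) n / n.choose 4 := by
  have hpos : (0 : ℝ) < n.choose 4 := by exact_mod_cast Nat.choose_pos hn
  have hle : (3 * n.choose 4 : ℝ) ≤
      4 * exH FourTwo (∅ : Set ((m : ℕ) × Finset (Finset (Fin m)))) n := by
    exact_mod_cast three_mul_choose_le_four_mul_exH_fourTwo n
  rw [le_div_iff₀ hpos]
  linarith

lemma exH_fourTwo_div_choose_le (𝓕 : Set ((m : ℕ) × Finset (Finset (Fin m)))) {n : ℕ}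
    (hn : 4 ≤ n) :
    (exH FourTwo 𝓕 n : ℝ) / n.choose 4 ≤ 3 / 4 * (1 + ((n : ℝ) - 3)⁻¹) := by
  have hpos : (0 : ℝ) < n.choose 4 := by exact_mod_cast Nat.choose_pos hn
  have hn3 : (n : ℝ) - 3 ≠ 0 := by
    have : (4 : ℝ) ≤ n := by exact_mod_cast hn
    linarith
  have hupper : (16 * exH FourTwo 𝓕 n : ℝ) ≤ n.choose 2 * ((n : ℝ) - 2) ^ 2 := by
    have := sixteen_mul_exH_fourTwo_le 𝓕 n
    rw [← Nat.cast_le (α := ℝ)] at this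
    push_cast [Nat.cast_sub (by omega : 2 ≤ n)] at this
    exact this
  have hchoose := cast_choose_four_mul_twelve (by omega : 2 ≤ n)
  have hbound : 3 / 4 * (1 + ((n : ℝ) - 3)⁻¹) * n.choose 4 =
      n.choose 2 * ((n : ℝ) - 2) ^ 2 / 16 := by
    field_simp
    linear_combination 4 * ((n : ℝ) - 2) * hchoose
  rw [div_le_iff₀ hpos, hbound]
  linarith

end ThreeGraph

open Filter Topology ThreeGraph

theorem inducibility_FourTwo :
    Filter.Tendsto
      (fun n => (exH FourTwo (∅ : Set ((m : ℕ) × Finset (Finset (Fin m)))) n : ℝ) / (n.choose 4))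
      Filter.atTop (nhds (3/4)) := by
  have hupper : Tendsto (fun n : ℕ => 3 / 4 * (1 + ((n : ℝ) - 3)⁻¹)) atTop (𝓝 (3 / 4)) := by
    simpa [sub_eq_add_neg] using
      ((tendsto_atTop_add_const_right atTop (-3 : ℝ)
        tendsto_natCast_atTop_atTop).inv_tendsto_atTop.const_add 1).const_mul (3 / 4 : ℝ)
  refine tendsto_of_tendsto_of_tendsto_of_le_of_le' tendsto_const_nhds hupper ?_ ?_ <;>
    filter_upwards [eventually_ge_atTop 4] with n hn
  · exact three_quarters_le_exH_fourTwo_div_choose hn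
  · exact exH_fourTwo_div_choose_le _ hn
end

section
/- Let D be any directed graph and define the 3-graph G(D) on the same vertex set by making {x,y,z} an edge if and only if the sub-digraph of D induced on {x,y,z} is isomorphic to the out-star S⃗3 (one vertex with arcs to the other two, and no other arcs). Then G(D) contains no subgraph isomorphic to K4 (the complete 3-graph on 4 vertices) and no subgraph isomorphic to C5 (the 3-graph on {1,2,3,4,5} with edges {1,2,3}, {2,3,4}, {3,4,5}, {4,5,1}, {5,1,2}). -/
/-- The set `S` of vertices induces a copy of the out-star `S⃗₃` in the directed graph
with arc set `E`: some vertex of `S` sends arcs to the other two, and there are no other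
arcs among the three vertices. -/
def CopyS3 {V : Type*} (E : Set (V × V)) (S : Set V) : Prop :=
  ∃ f : Fin 3 → V, Function.Injective f ∧ Set.range f = S ∧
    ∀ i j : Fin 3, i ≠ j → ((f i, f j) ∈ E ↔ i = 0)

/-!
Every triple inducing an out-star has a unique centre, the tail of both of its arcs. If two such
triples share two vertices and the centre of one lies in the other, the arc from that centre to a
common vertex forces the two centres to coincide. Along a tight cycle `{i, i+1, i+2}` (indices
mod `n`) this means that the position of the centre inside its triple drops by one mod `3` at
every step, which is impossible after `n` steps unless `3 ∣ n`. Both `K₄` and `C₅` are tight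
cycles, of lengths `4` and `5`.
-/

open Function

section OutStar

variable {V : Type*}

def IsOutStarCentre (E : Set (V × V)) (S : Set V) (c : V) : Prop :=
  c ∈ S ∧ ∀ x ∈ S, ∀ y ∈ S, x ≠ y → ((x, y) ∈ E ↔ x = c)

variable {E : Set (V × V)}

theorem CopyS3.exists_isOutStarCentre_preimage {W : Type*} {v : W → V} (hv : Injective v)
    {S : Set W} (h : CopyS3 E (v '' S)) : ∃ c, IsOutStarCentre (Prod.map v v ⁻¹' E) S c := by
  obtain ⟨f, hf, hrange, harc⟩ := h
  obtain ⟨c, hcS, hc⟩ : f 0 ∈ v '' S := hrange ▸ ⟨0, rfl⟩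
  refine ⟨c, hcS, fun x hx y hy hxy => ?_⟩
  obtain ⟨i, hi⟩ : v x ∈ Set.range f := hrange ▸ ⟨x, hx, rfl⟩
  obtain ⟨j, hj⟩ : v y ∈ Set.range f := hrange ▸ ⟨y, hy, rfl⟩
  have hij : i ≠ j := fun h => hxy (hv (by rw [← hi, ← hj, h]))
  change (v x, v y) ∈ E ↔ x = c
  rw [← hv.eq_iff, ← hi, ← hj, hc, harc i j hij, hf.eq_iff]

theorem IsOutStarCentre.eq_of_mem {S T : Set V} {c d w : V} (hc : IsOutStarCentre E S c)
    (hd : IsOutStarCentre E T d) (hcT : c ∈ T) (hwS : w ∈ S) (hwT : w ∈ T) (hwc : w ≠ c) :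
    c = d :=
  (hd.2 c hcT w hwT hwc.symm).1 ((hc.2 c hc.1 w hwS hwc.symm).2 rfl)

theorem IsOutStarCentre.shift {a b c d x y : V} (hab : a ≠ b) (hac : a ≠ c) (hbc : b ≠ c)
    (hx : IsOutStarCentre E {a, b, c} x) (hy : IsOutStarCentre E {b, c, d} y) :
    (x = a ∧ y = d) ∨ (x = b ∧ y = b) ∨ (x = c ∧ y = c) := by
  rcases hx.1 with rfl | rfl | rfl
  · rcases hy.1 with rfl | rfl | rfl
    · exact absurd (hy.eq_of_mem hx (by simp) (by simp) (by simp) hbc.symm) hab.symm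
    · exact absurd (hy.eq_of_mem hx (by simp) (by simp) (by simp) hbc) hac.symm
    · exact Or.inl ⟨rfl, rfl⟩
  · exact Or.inr (Or.inl ⟨rfl, (hx.eq_of_mem hy (by simp) (by simp) (by simp) hbc.symm).symm⟩)
  · exact Or.inr (Or.inr ⟨rfl, (hx.eq_of_mem hy (by simp) (by simp) (by simp) hbc).symm⟩)

end OutStar

theorem IsOutStarCentre.val_sub_eq_of_shift {n : ℕ} (hn : 3 ≤ n) {E : Set (ZMod n × ZMod n)}
    {i x y : ZMod n} (hx : IsOutStarCentre E {i, i + 1, i + 2} x)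
    (hy : IsOutStarCentre E {i + 1, i + 2, i + 3} y) :
    (x - i).val = ((y - (i + 1)).val + 1) % 3 := by
  have h0 : (0 : ZMod n).val = 0 := ZMod.val_zero
  have h1 : (1 : ZMod n).val = 1 := by
    simpa using ZMod.val_natCast_of_lt (show 1 < n by omega)
  have h2 : (2 : ZMod n).val = 2 := by
    simpa using ZMod.val_natCast_of_lt (show 2 < n by omega)
  have hne {a b : ZMod n} (h : a.val ≠ b.val) : i + a ≠ i + b :=
    fun e => h (congrArg ZMod.val (add_left_cancel e))
  have hi1 : i ≠ i + 1 := by simpa using hne (a := 0) (b := 1) (by omega)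
  have hi2 : i ≠ i + 2 := by simpa using hne (a := 0) (b := 2) (by omega)
  rcases hx.shift hi1 hi2 (hne (by omega)) hy with ⟨hx, hy⟩ | ⟨hx, hy⟩ | ⟨hx, hy⟩ <;>
    rw [hx, hy]
  · rw [sub_self, show i + 3 - (i + 1) = 2 by ring, h0, h2]
  · rw [add_sub_cancel_left, sub_self, h0, h1]
  · rw [add_sub_cancel_left, show i + 2 - (i + 1) = 1 by ring, h1, h2]

theorem not_forall_copyS3_tightCycle {V : Type*} {E : Set (V × V)} {n : ℕ} (hn : 3 ≤ n)
    (hn3 : ¬ 3 ∣ n) {v : ZMod n → V} (hv : Injective v) :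
    ¬ ∀ i : ZMod n, CopyS3 E (v '' {i, i + 1, i + 2}) := by
  intro h
  choose c hc using fun i => (h i).exists_isOutStarCentre_preimage hv
  set q : ZMod n → ℕ := fun i => (c i - i).val
  have step (i : ZMod n) : q i = (q (i + 1) + 1) % 3 := by
    have hnext := hc (i + 1)
    rw [show i + 1 + 1 = i + 2 by ring, show i + 1 + 2 = i + 3 by ring] at hnext
    exact (hc i).val_sub_eq_of_shift hn hnext
  have hq (m : ℕ) : q 0 = (q m + m) % 3 := by
    induction m with
    | zero => have := step 0; simp only [Nat.cast_zero, add_zero]; omega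
    | succ m ih => rw [ih, step m]; push_cast; omega
  have := hq n
  rw [ZMod.natCast_self] at this
  omega

theorem GD_K4_free_and_C5_free_general {V : Type*} (E : Set (V × V)) :
    (¬ ∃ f : Fin 4 → V, Function.Injective f ∧ ∀ e ∈ K4, CopyS3 E (f '' ↑e)) ∧
    (¬ ∃ f : Fin 5 → V, Function.Injective f ∧ ∀ e ∈ C5, CopyS3 E (f '' ↑e)) := by
  -- `ZMod (m + 1)` is `Fin (m + 1)` by definition, so `h` is a statement about `ZMod 4`, `ZMod 5`.
  refine ⟨fun ⟨f, hf, hcopy⟩ => ?_, fun ⟨f, hf, hcopy⟩ => ?_⟩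
  · have h (i : Fin 4) : CopyS3 E (f '' {i, i + 1, i + 2}) := by
      simpa using hcopy {i, i + 1, i + 2} (by revert i; decide)
    exact not_forall_copyS3_tightCycle (n := 4) (by norm_num) (by norm_num) hf h
  · have h (i : Fin 5) : CopyS3 E (f '' {i, i + 1, i + 2}) := by
      simpa using hcopy {i, i + 1, i + 2} (by revert i; decide)
    exact not_forall_copyS3_tightCycle (n := 5) (by norm_num) (by norm_num) hf h

/-- For any directed graph `D = (V, E)`, the 3-graph `G(D)` whose edges are the triples
inducing a copy of `S⃗₃` contains no copy of `K₄` and no copy of `C₅`. -/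
theorem GD_K4_free_and_C5_free {V : Type*} (E : Set (V × V)) (hE : ∀ v : V, (v, v) ∉ E) :
    (¬ ∃ f : Fin 4 → V, Function.Injective f ∧ ∀ e ∈ K4, CopyS3 E (f '' ↑e)) ∧
    (¬ ∃ f : Fin 5 → V, Function.Injective f ∧ ∀ e ∈ C5, CopyS3 E (f '' ↑e)) :=
  GD_K4_free_and_C5_free_general E
end
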